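/- arXiv:1712.02690 — 2 statements merged into one kernel-verified Lean document; each statement's English description precedes it below -/
import Mathlib

section
/- For every ε ∈ [0,1) and every integer k ≥ 1, any point (δ₀,…,δ_{k−1}) ∈ [0,1]^k at which R_ε attains its maximum over [0,1]^k has all coordinates in the open interval (0, 1/2) and satisfies the recursion (∗): δ_j = δ_{j+1} / (δ_{j+1} + (1−δ_{j+1})·((1−δ_{j+1})/(1−δ_{j+2}))^{ε̄}) for every j = 0,…,k−2 (with the convention δ̄_k := 1, i.e., the j = k−2 equation reads δ_{k−2} = δ_{k−1}/(δ_{k−1} + (1−δ_{k−1})^{1+ε̄})). -/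
/-- The binary entropy function (base 2), with `H2 0 = H2 1 = 0`. -/
noncomputable def H2 (x : ℝ) : ℝ := -(x * Real.logb 2 x) - (1 - x) * Real.logb 2 (1 - x)

/-- The function `R_ε(δ₀,…,δ_{k−1})`. -/
noncomputable def Rfun (ε : ℝ) (k : ℕ) (δ : ℕ → ℝ) : ℝ :=
  (∑ i ∈ Finset.range k, (1 - ε) ^ (i + 1) * H2 (δ i) * ∏ m ∈ Finset.range i, δ m) /
  (1 + ∑ i ∈ Finset.range k, (1 - ε) ^ (i + 1) * ∏ m ∈ Finset.range (i + 1), δ m)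

/-- The recursion (∗): for every `j = 0,…,k−2`,
`δ_j = δ_{j+1} / (δ_{j+1} + (1−δ_{j+1})·((1−δ_{j+1})/(1−δ_{j+2}))^{ε̄})`,
with the convention `δ̄_k := 1` (i.e. for `j = k−2` the inner denominator `1−δ_{j+2}` is
replaced by `1`).  The exponentiation is the real power `x ^ (1−ε)`. -/
def SatisfiesRec (ε : ℝ) (k : ℕ) (δ : ℕ → ℝ) : Prop :=
  ∀ j : ℕ, j + 2 ≤ k →
    δ j = δ (j + 1) /
      (δ (j + 1) + (1 - δ (j + 1)) *
        ((1 - δ (j + 1)) / (if j + 2 = k then 1 else 1 - δ (j + 2))) ^ (1 - ε))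

/-!
Dinkelbach's trick replaces the ratio `R_ε = N / D` by `N - R·D`, where `R` is the maximal value:
a maximiser of the ratio maximises `N - R·D`, with maximal value `0`. Unlike the ratio, this
function obeys the first-coordinate recursion `F_{n+1}(δ) = ε̄ (H₂(δ₀) + δ₀ F_n(tail δ)) - R`.
So the head of a maximiser maximises the strictly concave `x ↦ H₂ x + F_n(tail δ) x`, which forces
`δ₀ ∈ (0, 1)` with log-odds `log₂((1-δ₀)/δ₀) = -F_n(tail δ)`; as `δ₀ > 0`, the tail is again a
maximiser. Unfolding one more step of the recursion relates the log-odds of consecutive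
coordinates, which is (∗). Padding a proper tail with zeros gives a point of the cube that cannot be
a maximiser, so `F` of every proper tail is negative: all log-odds are positive, i.e. `δ_j < 1/2`.
-/

open Real Set

lemma H2_eq_binEntropy_div (x : ℝ) : H2 x = binEntropy x / log 2 := by
  simp only [H2, binEntropy, logb, log_inv]
  ring

lemma strictConcaveOn_H2_add_mul (c : ℝ) :
    StrictConcaveOn ℝ (Icc 0 1) fun x => H2 x + c * x := by
  refine ⟨convex_Icc 0 1, fun x hx y hy hxy a b ha hb hab => ?_⟩
  have key := div_lt_div_of_pos_right (strictConcave_binEntropy.2 hx hy hxy ha hb hab)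
    (log_pos one_lt_two)
  simp only [smul_eq_mul, H2_eq_binEntropy_div] at key ⊢
  linear_combination key

lemma hasDerivAt_H2 {p : ℝ} (hp₀ : p ≠ 0) (hp₁ : p ≠ 1) :
    HasDerivAt H2 (logb 2 ((1 - p) / p)) p := by
  have h := (hasDerivAt_binEntropy hp₀ hp₁).div_const (log 2)
  rwa [← funext H2_eq_binEntropy_div, ← log_div (sub_ne_zero.2 hp₁.symm) hp₀] at h

lemma mem_Ioo_and_logb_odds_eq_of_isMaxOn_H2_add_mul {c y : ℝ} (hy : y ∈ Icc 0 1)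
    (hmax : IsMaxOn (fun x => H2 x + c * x) (Icc 0 1) y) :
    y ∈ Ioo 0 1 ∧ logb 2 ((1 - y) / y) = -c := by
  set p : ℝ := (1 + 2 ^ (-c))⁻¹
  have h2c : 0 < (2 : ℝ) ^ (-c) := rpow_pos_of_pos two_pos _
  have hp : p ∈ Ioo 0 1 := ⟨by positivity, inv_lt_one_of_one_lt₀ (by linarith)⟩
  have hodds : logb 2 ((1 - p) / p) = -c := by
    rw [show (1 - p) / p = 2 ^ (-c) by simp only [p]; field_simp; ring,
      logb_rpow two_pos (by norm_num)]
  have hderiv : HasDerivAt (fun x => H2 x + c * x) 0 p := by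
    have h := (hasDerivAt_H2 hp.1.ne' hp.2.ne).add ((hasDerivAt_id p).const_mul c)
    rwa [hodds, mul_one, neg_add_cancel] at h
  have hpmax : IsMaxOn (fun x => H2 x + c * x) (Icc 0 1) p := by
    have hmin := (strictConcaveOn_H2_add_mul c).concaveOn.neg.isMinOn_of_rightDeriv_eq_zero
      (by rwa [interior_Icc])
      ((hderiv.neg.hasDerivWithinAt.derivWithin (uniqueDiffWithinAt_Ioi p)).trans neg_zero)
    exact isMaxOn_iff.2 fun x hx => neg_le_neg_iff.mp (hmin hx)
  obtain rfl := (strictConcaveOn_H2_add_mul c).eq_of_isMaxOn hmax hpmax hy (Ioo_subset_Icc_self hp)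
  exact ⟨hp, hodds⟩

lemma H2_eq_mul_logb_odds_sub {u : ℝ} (hu : u ∈ Ioo 0 1) :
    H2 u = u * logb 2 ((1 - u) / u) - logb 2 (1 - u) := by
  rw [logb_div (sub_pos.2 hu.2).ne' hu.1.ne', H2]
  ring

lemma eq_div_of_logb_odds_eq {u v c a : ℝ} (hu : u ∈ Ioo 0 1) (hv : v ∈ Ioo 0 1) (hc : 0 < c)
    (h : logb 2 ((1 - v) / v) = logb 2 ((1 - u) / u) + a * (logb 2 (1 - u) - logb 2 c)) :
    v = u / (u + (1 - u) * ((1 - u) / c) ^ a) := by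
  have hu' : 0 < 1 - u := sub_pos.2 hu.2
  have hpow : 0 < ((1 - u) / c) ^ a := rpow_pos_of_pos (div_pos hu' hc) a
  have hodds : (1 - v) / v = (1 - u) / u * ((1 - u) / c) ^ a := by
    refine logb_injOn_pos one_lt_two (div_pos (sub_pos.2 hv.2) hv.1)
      (mul_pos (div_pos hu' hu.1) hpow) ?_
    rw [h, logb_mul (div_pos hu' hu.1).ne' hpow.ne', logb_rpow_eq_mul_logb_of_pos (div_pos hu' hc),
      logb_div hu'.ne' hc.ne']
  rw [div_mul_eq_mul_div, div_eq_div_iff hv.1.ne' hu.1.ne'] at hodds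
  rw [eq_div_iff (add_pos hu.1 (mul_pos hu' hpow)).ne']
  linarith

lemma lt_half_of_logb_odds_pos {v : ℝ} (hv : v ∈ Ioo 0 1) (h : 0 < logb 2 ((1 - v) / v)) :
    v < 1 / 2 := by
  rw [logb_pos_iff one_lt_two (div_pos (sub_pos.2 hv.2) hv.1), one_lt_div hv.1] at h
  linarith

section

open Finset

noncomputable def Rnum (ε : ℝ) (k : ℕ) (δ : ℕ → ℝ) : ℝ :=
  ∑ i ∈ range k, (1 - ε) ^ (i + 1) * H2 (δ i) * ∏ m ∈ range i, δ m

noncomputable def Rden (ε : ℝ) (k : ℕ) (δ : ℕ → ℝ) : ℝ :=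
  1 + ∑ i ∈ range k, (1 - ε) ^ (i + 1) * ∏ m ∈ range (i + 1), δ m

lemma Rfun_eq_div (ε : ℝ) (k : ℕ) (δ : ℕ → ℝ) : Rfun ε k δ = Rnum ε k δ / Rden ε k δ := rfl

lemma Rnum_zero (ε : ℝ) (δ : ℕ → ℝ) : Rnum ε 0 δ = 0 := by simp [Rnum]

lemma Rden_zero (ε : ℝ) (δ : ℕ → ℝ) : Rden ε 0 δ = 1 := by simp [Rden]

lemma Rnum_succ (ε : ℝ) (k : ℕ) (δ : ℕ → ℝ) :
    Rnum ε (k + 1) δ = (1 - ε) * (H2 (δ 0) + δ 0 * Rnum ε k fun i => δ (i + 1)) := by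
  rw [Rnum, Rnum, sum_range_succ', mul_add, mul_sum, mul_sum, add_comm]
  congr 1
  · simp
  · refine sum_congr rfl fun i _ => ?_
    rw [prod_range_succ']
    ring

lemma Rden_succ (ε : ℝ) (k : ℕ) (δ : ℕ → ℝ) :
    Rden ε (k + 1) δ = 1 + (1 - ε) * δ 0 * Rden ε k fun i => δ (i + 1) := by
  rw [Rden, Rden, sum_range_succ', mul_add, mul_one, mul_sum, add_comm (∑ _ ∈ _, _)]
  congr 2
  · simp
  · refine sum_congr rfl fun i _ => ?_
    rw [prod_range_succ' _ (i + 1)]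
    ring

end

/-- Dinkelbach's parametric form of `Rfun ε k = Rnum ε k / Rden ε k`. -/
noncomputable def dinkelbach (ε R : ℝ) (k : ℕ) (δ : ℕ → ℝ) : ℝ := Rnum ε k δ - R * Rden ε k δ

def cube (n : ℕ) : Set (ℕ → ℝ) := {δ | ∀ i < n, δ i ∈ Icc 0 1}

def seqCons (x : ℝ) (t : ℕ → ℝ) : ℕ → ℝ
  | 0 => x
  | i + 1 => t i

section

variable {ε R : ℝ} {n : ℕ} {δ : ℕ → ℝ}

lemma dinkelbach_zero (δ : ℕ → ℝ) : dinkelbach ε R 0 δ = -R := by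
  simp [dinkelbach, Rnum_zero, Rden_zero]

lemma dinkelbach_succ (δ : ℕ → ℝ) :
    dinkelbach ε R (n + 1) δ =
      (1 - ε) * (H2 (δ 0) + δ 0 * dinkelbach ε R n fun i => δ (i + 1)) - R := by
  rw [dinkelbach, dinkelbach, Rnum_succ, Rden_succ]
  ring

lemma seqCons_head_tail (δ : ℕ → ℝ) : seqCons (δ 0) (fun i => δ (i + 1)) = δ := by
  funext i
  cases i <;> rfl

lemma seqCons_mem_cube {x : ℝ} {t : ℕ → ℝ} (hx : x ∈ Icc 0 1) (ht : t ∈ cube n) :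
    seqCons x t ∈ cube (n + 1)
  | 0, _ => hx
  | i + 1, hi => ht i (Nat.lt_of_succ_lt_succ hi)

lemma tail_mem_cube (hδ : δ ∈ cube (n + 1)) : (fun i => δ (i + 1)) ∈ cube n :=
  fun i hi => hδ (i + 1) (Nat.succ_lt_succ hi)

lemma shift_mem_cube (hδ : δ ∈ cube n) (j : ℕ) : (fun i => δ (j + i)) ∈ cube (n - j) :=
  fun i hi => hδ (j + i) (by omega)

lemma Rden_pos (hε : ε ≤ 1) (hδ : δ ∈ cube n) : 0 < Rden ε n δ := by
  induction n generalizing δ with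
  | zero => simp [Rden_zero]
  | succ n ih =>
    rw [Rden_succ]
    have := mul_nonneg (mul_nonneg (sub_nonneg.2 hε) (hδ 0 n.succ_pos).1) (ih (tail_mem_cube hδ)).le
    linarith

lemma dinkelbach_Rfun_self (hε : ε ≤ 1) (hδ : δ ∈ cube n) : dinkelbach ε (Rfun ε n δ) n δ = 0 := by
  rw [dinkelbach, Rfun_eq_div, div_mul_cancel₀ _ (Rden_pos hε hδ).ne', sub_self]

lemma isMaxOn_dinkelbach_of_isMaxOn_Rfun (hε : ε ≤ 1) (hδ : δ ∈ cube n)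
    (hmax : IsMaxOn (Rfun ε n) (cube n) δ) :
    IsMaxOn (dinkelbach ε (Rfun ε n δ) n) (cube n) δ := by
  refine isMaxOn_iff.2 fun δ' hδ' => ?_
  have hle : Rnum ε n δ' / Rden ε n δ' ≤ Rfun ε n δ := isMaxOn_iff.1 hmax δ' hδ'
  rw [dinkelbach_Rfun_self hε hδ]
  exact sub_nonpos.2 ((div_le_iff₀ (Rden_pos hε hδ')).1 hle)

lemma IsMaxOn.dinkelbach_head (hε : ε < 1) (hδ : δ ∈ cube (n + 1))
    (hmax : IsMaxOn (dinkelbach ε R (n + 1)) (cube (n + 1)) δ) :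
    δ 0 ∈ Ioo 0 1 ∧ logb 2 ((1 - δ 0) / δ 0) = -dinkelbach ε R n fun i => δ (i + 1) := by
  refine mem_Ioo_and_logb_odds_eq_of_isMaxOn_H2_add_mul (hδ 0 n.succ_pos)
    (isMaxOn_iff.2 fun x hx => ?_)
  have h := isMaxOn_iff.1 hmax _ (seqCons_mem_cube hx (tail_mem_cube hδ))
  rw [← seqCons_head_tail δ] at h
  simp only [dinkelbach_succ, seqCons, sub_le_sub_iff_right] at h
  linarith [le_of_mul_le_mul_left h (sub_pos.2 hε)]

lemma IsMaxOn.dinkelbach_tail (hε : ε < 1) (hδ : δ ∈ cube (n + 1))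
    (hmax : IsMaxOn (dinkelbach ε R (n + 1)) (cube (n + 1)) δ) :
    IsMaxOn (dinkelbach ε R n) (cube n) fun i => δ (i + 1) := by
  refine isMaxOn_iff.2 fun t ht => ?_
  have h := isMaxOn_iff.1 hmax _ (seqCons_mem_cube (hδ 0 n.succ_pos) ht)
  rw [← seqCons_head_tail δ] at h
  simp only [dinkelbach_succ, seqCons, sub_le_sub_iff_right] at h
  exact le_of_mul_le_mul_left (by linarith [le_of_mul_le_mul_left h (sub_pos.2 hε)])
    (hmax.dinkelbach_head hε hδ).1.1

lemma shift_succ (δ : ℕ → ℝ) (j : ℕ) :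
    (fun i => δ (j + 1 + i)) = fun i => δ (j + (i + 1)) := by
  simp only [add_assoc, add_comm 1]

lemma IsMaxOn.dinkelbach_shift (hε : ε < 1) (hδ : δ ∈ cube n)
    (hmax : IsMaxOn (dinkelbach ε R n) (cube n) δ) {j : ℕ} (hj : j ≤ n) :
    IsMaxOn (dinkelbach ε R (n - j)) (cube (n - j)) fun i => δ (j + i) := by
  induction j with
  | zero => simpa using hmax
  | succ j ih =>
    obtain ⟨m, hm⟩ : ∃ m, n - j = m + 1 := ⟨n - (j + 1), by omega⟩
    have h := ih (by omega)
    rw [hm] at h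
    have htail := h.dinkelbach_tail hε (hm ▸ shift_mem_cube hδ j)
    rwa [show n - (j + 1) = m by omega, shift_succ]

lemma IsMaxOn.dinkelbach_coord (hε : ε < 1) (hδ : δ ∈ cube n)
    (hmax : IsMaxOn (dinkelbach ε R n) (cube n) δ) {j : ℕ} (hj : j < n) :
    δ j ∈ Ioo 0 1 ∧
      logb 2 ((1 - δ j) / δ j) = -dinkelbach ε R (n - (j + 1)) fun i => δ (j + 1 + i) := by
  have h := hmax.dinkelbach_shift hε hδ hj.le
  have hmem := shift_mem_cube hδ j
  rw [show n - j = n - (j + 1) + 1 by omega] at h hmem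
  rw [shift_succ]
  exact h.dinkelbach_head hε hmem

lemma dinkelbach_eq_of_eq_zero {m : ℕ} {t : ℕ → ℝ} (heq : ∀ i < m, δ i = t i) (hzero : δ m = 0)
    (hm : m < n) : dinkelbach ε R n δ = dinkelbach ε R m t := by
  induction m generalizing n δ t with
  | zero =>
    obtain ⟨n, rfl⟩ := Nat.exists_eq_add_one.2 hm
    simp [dinkelbach_succ, dinkelbach_zero, hzero, H2]
  | succ m ih =>
    obtain ⟨n, rfl⟩ := Nat.exists_eq_add_one.2 (m.succ_pos.trans hm)
    rw [dinkelbach_succ, dinkelbach_succ, heq 0 m.succ_pos,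
      ih (fun i hi => heq (i + 1) (by omega)) hzero (by omega)]

lemma IsMaxOn.dinkelbach_lt (hε : ε < 1)
    (hmax : IsMaxOn (dinkelbach ε R n) (cube n) δ) {m : ℕ} (hm : m < n) {t : ℕ → ℝ}
    (ht : t ∈ cube m) : dinkelbach ε R m t < dinkelbach ε R n δ := by
  set pad : ℕ → ℝ := fun i => if i < m then t i else 0
  have hpad : pad ∈ cube n := fun i _ => by
    by_cases hi : i < m
    · simpa [pad, hi] using ht i hi
    · simp [pad, hi]
  have hval : dinkelbach ε R n pad = dinkelbach ε R m t :=
    dinkelbach_eq_of_eq_zero (fun i hi => if_pos hi) (if_neg m.lt_irrefl) hm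
  refine lt_of_le_of_ne (hval ▸ isMaxOn_iff.1 hmax pad hpad) fun h => ?_
  have hpadmax : IsMaxOn (dinkelbach ε R n) (cube n) pad :=
    isMaxOn_iff.2 fun δ' hδ' => (isMaxOn_iff.1 hmax δ' hδ').trans (hval.trans h).ge
  have := (hpadmax.dinkelbach_coord hε hpad hm).1.1
  simp [pad] at this

lemma IsMaxOn.logb_odds_eq (hε : ε < 1) (hδ : δ ∈ cube n)
    (hmax : IsMaxOn (dinkelbach ε R n) (cube n) δ) {j : ℕ} (hj : j < n) :
    logb 2 ((1 - δ j) / δ j) = R + (1 - ε) * logb 2 (if j + 1 = n then 1 else 1 - δ (j + 1)) := by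
  rw [(hmax.dinkelbach_coord hε hδ hj).2]
  split_ifs with hn
  · simp [← hn, dinkelbach_zero]
  · obtain ⟨hmem, hodds⟩ := hmax.dinkelbach_coord hε hδ (j := j + 1) (by omega)
    rw [show n - (j + 1) = n - (j + 1 + 1) + 1 by omega, dinkelbach_succ, ← shift_succ,
      H2_eq_mul_logb_odds_sub hmem, hodds]
    ring

end

theorem maximizer_interior_and_recursion_general
    (ε : ℝ) (hε : ε ∈ Set.Ico (0 : ℝ) 1) (k : ℕ)
    (δ : ℕ → ℝ) (hδ : ∀ i < k, δ i ∈ Set.Icc (0 : ℝ) 1)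
    (hmax : ∀ δ' : ℕ → ℝ, (∀ i < k, δ' i ∈ Set.Icc (0 : ℝ) 1) →
      Rfun ε k δ' ≤ Rfun ε k δ) :
    (∀ j < k, δ j ∈ Set.Ioo (0 : ℝ) (1 / 2)) ∧ SatisfiesRec ε k δ := by
  have hε₁ : ε < 1 := hε.2
  have hδ : δ ∈ cube k := hδ
  have hdink := isMaxOn_dinkelbach_of_isMaxOn_Rfun hε₁.le hδ (isMaxOn_iff.2 hmax)
  have hcoord {j : ℕ} (hj : j < k) := hdink.dinkelbach_coord hε₁ hδ hj
  refine ⟨fun j hj => ⟨(hcoord hj).1.1, lt_half_of_logb_odds_pos (hcoord hj).1 ?_⟩, fun j hj => ?_⟩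
  · rw [(hcoord hj).2, neg_pos, ← dinkelbach_Rfun_self hε₁.le hδ]
    exact hdink.dinkelbach_lt hε₁ (by omega) (shift_mem_cube hδ (j + 1))
  · have hc : 0 < if j + 2 = k then (1 : ℝ) else 1 - δ (j + 2) := by
      split_ifs
      · exact one_pos
      · exact sub_pos.2 (hcoord (j := j + 2) (by omega)).1.2
    refine eq_div_of_logb_odds_eq (hcoord (by omega)).1 (hcoord (by omega)).1 hc ?_
    rw [hdink.logb_odds_eq hε₁ hδ (j := j) (by omega),
      hdink.logb_odds_eq hε₁ hδ (j := j + 1) (by omega), if_neg (by omega)]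
    ring

/-- For every `ε ∈ [0,1)` and integer `k ≥ 1`, any maximizer of `R_ε` over `[0,1]^k`
has all coordinates in the open interval `(0, 1/2)` and satisfies the recursion (∗). -/
theorem maximizer_interior_and_recursion
    (ε : ℝ) (hε : ε ∈ Set.Ico (0 : ℝ) 1) (k : ℕ) (hk : 1 ≤ k)
    (δ : ℕ → ℝ) (hδ : ∀ i < k, δ i ∈ Set.Icc (0 : ℝ) 1)
    (hmax : ∀ δ' : ℕ → ℝ, (∀ i < k, δ' i ∈ Set.Icc (0 : ℝ) 1) →
      Rfun ε k δ' ≤ Rfun ε k δ) :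
    (∀ j < k, δ j ∈ Set.Ioo (0 : ℝ) (1 / 2)) ∧ SatisfiesRec ε k δ :=
  maximizer_interior_and_recursion_general ε hε k δ hδ hmax
end

section
/- The maximum of the function δ ↦ H₂(δ)/(2 + 2δ) over the interval [0, 1] is attained at the unique point δ* = (3 − √5)/2, and this maximizer satisfies 1/3 < δ* < 1/2. -/
open Real Set

theorem lt_of_strictMonoOn_Icc_of_strictAntiOn_Icc {α β : Type*} [LinearOrder α] [Preorder β]
    {f : α → β} {l a r x : α} (hmono : StrictMonoOn f (Icc l a))
    (hanti : StrictAntiOn f (Icc a r)) (hx : x ∈ Icc l r) (hxa : x ≠ a) : f x < f a := by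
  rcases hxa.lt_or_gt with hlt | hgt
  · exact hmono ⟨hx.1, hlt.le⟩ ⟨hx.1.trans hlt.le, le_rfl⟩ hlt
  · exact hanti ⟨le_rfl, hgt.le.trans hx.2⟩ ⟨hgt.le, hx.2⟩ hgt

theorem H2_eq_negMulLog (x : ℝ) : H2 x = (negMulLog x + negMulLog (1 - x)) / log 2 := by
  simp only [H2, logb, negMulLog]
  ring

theorem continuous_H2 : Continuous H2 := by
  simp only [funext H2_eq_negMulLog]
  fun_prop

theorem hasDerivAt_H2_s14 {x : ℝ} (hx0 : x ≠ 0) (hx1 : x ≠ 1) :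
    HasDerivAt H2 ((log (1 - x) - log x) / log 2) x := by
  have h1 : HasDerivAt (fun y => negMulLog (1 - y)) ((-log (1 - x) - 1) * -1) x :=
    (hasDerivAt_negMulLog (sub_ne_zero.2 hx1.symm)).comp x ((hasDerivAt_id x).const_sub 1)
  rw [funext H2_eq_negMulLog]
  exact (((hasDerivAt_negMulLog hx0).add h1).div_const (log 2)).congr_deriv (by ring)

theorem hasDerivAt_H2_div_affine {c d x : ℝ} (hx0 : x ≠ 0) (hx1 : x ≠ 1)
    (hden : c + d * x ≠ 0) :
    HasDerivAt (fun δ => H2 δ / (c + d * δ))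
      (((c + d) * log (1 - x) - c * log x) / (log 2 * (c + d * x) ^ 2)) x := by
  have hden' : HasDerivAt (fun δ => c + d * δ) d x := by
    simpa using ((hasDerivAt_id x).const_mul d).const_add c
  refine ((hasDerivAt_H2_s14 hx0 hx1).div hden' hden).congr_deriv ?_
  rw [H2_eq_negMulLog]
  simp only [negMulLog]
  field_simp
  ring

theorem sq_one_sub_sub_eq (x : ℝ) :
    (1 - x) ^ 2 - x = (x - (3 - √5) / 2) * (x - (3 + √5) / 2) := by
  ring_nf
  rw [sq_sqrt (by norm_num)]
  ring

theorem one_third_lt_three_sub_sqrt_five_div_two_lt_half :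
    1 / 3 < (3 - √5) / 2 ∧ (3 - √5) / 2 < 1 / 2 := by
  have h5 := sq_sqrt (show (0 : ℝ) ≤ 5 by norm_num)
  have := sqrt_nonneg 5
  constructor <;> nlinarith

theorem log_lt_two_mul_log_one_sub {x : ℝ} (hx0 : 0 < x) (hxa : x < (3 - √5) / 2) :
    log x < 2 * log (1 - x) := by
  have hsq : x < (1 - x) ^ 2 := by
    have := mul_pos_of_neg_of_neg (sub_neg.2 hxa)
      (sub_neg.2 (show x < (3 + √5) / 2 by linarith [sqrt_nonneg 5]))
    linarith [sq_one_sub_sub_eq x]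
  rw [← log_lt_log_iff hx0 (hx0.trans hsq)] at hsq
  simpa [log_pow] using hsq

theorem two_mul_log_one_sub_lt_log {x : ℝ} (hxa : (3 - √5) / 2 < x) (hx1 : x < 1) :
    2 * log (1 - x) < log x := by
  have hsq : (1 - x) ^ 2 < x := by
    have := mul_neg_of_pos_of_neg (sub_pos.2 hxa)
      (sub_neg.2 (show x < (3 + √5) / 2 by linarith [sqrt_nonneg 5]))
    linarith [sq_one_sub_sub_eq x]
  have hx0 : 0 < x := by linarith [one_third_lt_three_sub_sqrt_five_div_two_lt_half.1]
  rw [← log_lt_log_iff (pow_pos (sub_pos.2 hx1) 2) hx0] at hsq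
  simpa [log_pow] using hsq

theorem hasDerivAt_objective {x : ℝ} (hx0 : 0 < x) (hx1 : x < 1) :
    HasDerivAt (fun δ => H2 δ / (2 + 2 * δ))
      ((4 * log (1 - x) - 2 * log x) / (log 2 * (2 + 2 * x) ^ 2)) x := by
  convert hasDerivAt_H2_div_affine (c := 2) (d := 2) hx0.ne' hx1.ne (by positivity) using 2
  ring

theorem continuousOn_objective : ContinuousOn (fun δ => H2 δ / (2 + 2 * δ)) (Icc 0 1) :=
  continuous_H2.continuousOn.div (by fun_prop) fun _ hx => by linarith [hx.1]

theorem strictMonoOn_objective :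
    StrictMonoOn (fun δ => H2 δ / (2 + 2 * δ)) (Icc 0 ((3 - √5) / 2)) := by
  have ha1 : (3 - √5) / 2 ≤ 1 := by
    linarith [one_third_lt_three_sub_sqrt_five_div_two_lt_half.2]
  refine strictMonoOn_of_deriv_pos (convex_Icc _ _)
    (continuousOn_objective.mono (Icc_subset_Icc le_rfl ha1)) fun x hx => ?_
  rw [interior_Icc] at hx
  rw [(hasDerivAt_objective hx.1 (hx.2.trans_le ha1)).deriv]
  have := log_lt_two_mul_log_one_sub hx.1 hx.2
  exact div_pos (by linarith) (mul_pos (log_pos one_lt_two) (pow_pos (by linarith [hx.1]) 2))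

theorem strictAntiOn_objective :
    StrictAntiOn (fun δ => H2 δ / (2 + 2 * δ)) (Icc ((3 - √5) / 2) 1) := by
  have ha0 : 0 ≤ (3 - √5) / 2 := by
    linarith [one_third_lt_three_sub_sqrt_five_div_two_lt_half.1]
  refine strictAntiOn_of_deriv_neg (convex_Icc _ _)
    (continuousOn_objective.mono (Icc_subset_Icc ha0 le_rfl)) fun x hx => ?_
  rw [interior_Icc] at hx
  have hx0 : 0 < x := ha0.trans_lt hx.1
  rw [(hasDerivAt_objective hx0 hx.2).deriv]
  have := two_mul_log_one_sub_lt_log hx.1 hx.2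
  exact div_neg_of_neg_of_pos (by linarith)
    (mul_pos (log_pos one_lt_two) (pow_pos (by linarith) 2))

/-- The maximum of `δ ↦ H₂(δ)/(2+2δ)` over `[0,1]` is attained at the unique point
`δ* = (3−√5)/2`, and this maximizer satisfies `1/3 < δ* < 1/2`. -/
theorem noncausal_objective_unique_maximizer :
    IsGreatest ((fun δ : ℝ => H2 δ / (2 + 2 * δ)) '' Set.Icc 0 1)
      (H2 ((3 - Real.sqrt 5) / 2) / (2 + 2 * ((3 - Real.sqrt 5) / 2))) ∧
    (3 - Real.sqrt 5) / 2 ∈ Set.Icc (0 : ℝ) 1 ∧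
    (∀ x ∈ Set.Icc (0 : ℝ) 1,
      H2 x / (2 + 2 * x) = H2 ((3 - Real.sqrt 5) / 2) / (2 + 2 * ((3 - Real.sqrt 5) / 2)) →
      x = (3 - Real.sqrt 5) / 2) ∧
    1 / 3 < (3 - Real.sqrt 5) / 2 ∧ (3 - Real.sqrt 5) / 2 < 1 / 2 := by
  obtain ⟨ha13, ha12⟩ := one_third_lt_three_sub_sqrt_five_div_two_lt_half
  have ha : (3 - √5) / 2 ∈ Icc (0 : ℝ) 1 := ⟨by linarith, by linarith⟩
  have hlt : ∀ x ∈ Icc (0 : ℝ) 1, x ≠ (3 - √5) / 2 →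
      H2 x / (2 + 2 * x) < H2 ((3 - √5) / 2) / (2 + 2 * ((3 - √5) / 2)) := fun _ hx =>
    lt_of_strictMonoOn_Icc_of_strictAntiOn_Icc strictMonoOn_objective strictAntiOn_objective hx
  refine ⟨⟨mem_image_of_mem _ ha, ?_⟩, ha, fun x hx heq => ?_, ha13, ha12⟩
  · rintro _ ⟨x, hx, rfl⟩
    rcases eq_or_ne x ((3 - √5) / 2) with rfl | hne
    · exact le_rfl
    · exact (hlt x hx hne).le
  · by_contra hne
    exact (hlt x hx hne).ne heq
end
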